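/- Let B ⊆ (0,∞) be a Baire non-meagre set. Then there exists ε > 0 such that for every s ∈ ((1+ε)^{-1}, 1+ε), the set B ∩ s^{-1}B is non-meagre. -/

import Mathlib

open Set Filter

private lemma meagre_union {s t : Set ℝ} (hs : IsMeagre s) (ht : IsMeagre t) :
    IsMeagre (s ∪ t) := by
  rw [IsMeagre, Set.compl_union]
  exact Filter.inter_mem hs ht

private lemma open_nonmeagre {U : Set ℝ} (hU : IsOpen U) (hne : U.Nonempty) :
    ¬ IsMeagre U := by
  intro h
  have hd : Dense Uᶜ := dense_of_mem_residual h
  have : Uᶜ = univ := by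
    rw [← hU.isClosed_compl.closure_eq]; exact hd.closure_eq
  rcases hne with ⟨x, hx⟩
  have : x ∈ Uᶜ := this ▸ mem_univ x
  exact this hx

theorem kemperman_displacement_multiplicative (B : Set ℝ)
    (hBsub : B ⊆ Set.Ioi 0)
    (hB : BaireMeasurableSet B) (hBnm : ¬ IsMeagre B) :
    ∃ ε > (0:ℝ), ∀ s : ℝ, (1 + ε)⁻¹ < s → s < 1 + ε →
      ¬ IsMeagre (B ∩ {x : ℝ | s * x ∈ B}) := by
  obtain ⟨U, hUopen, hUeq⟩ := hB.residualEq_isOpen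
  set M : Set ℝ := {x | ¬ (x ∈ B ↔ x ∈ U)} with hM
  have hMmeagre : IsMeagre M := by
    rw [IsMeagre]
    refine mem_of_superset hUeq ?_
    intro x hx
    simp only [M, mem_compl_iff, mem_setOf_eq, not_not]
    exact iff_of_eq hx
  -- B \ M ⊆ U and U \ M ⊆ B
  have hBU : ∀ x, x ∈ B → x ∉ M → x ∈ U := fun x hxB hxM => (not_not.mp hxM).mp hxB
  have hUB : ∀ x, x ∈ U → x ∉ M → x ∈ B := fun x hxU hxM => (not_not.mp hxM).mpr hxU
  -- pick x ∈ B ∩ U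
  have hBdiff : (B \ M).Nonempty := by
    rw [nonempty_iff_ne_empty]
    intro h
    exact hBnm (hMmeagre.mono (fun x hx => by
      by_contra hxM
      exact (eq_empty_iff_forall_notMem.mp h x) ⟨hx, hxM⟩))
  obtain ⟨x, hxB, hxM⟩ := hBdiff
  have hxU : x ∈ U := hBU x hxB hxM
  have hxpos : (0:ℝ) < x := hBsub hxB
  obtain ⟨δ, hδpos, hball⟩ := Metric.isOpen_iff.mp hUopen x hxU
  refine ⟨δ / (2 * x), by positivity, ?_⟩
  intro s hs1 hs2
  set ε := δ / (2 * x) with hε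
  have hεpos : (0:ℝ) < ε := by positivity
  have hspos : (0:ℝ) < s := lt_trans (by positivity) hs1
  have habs : |s - 1| < ε := by
    rw [abs_sub_lt_iff]
    constructor
    · linarith
    · have h1 : (1 + ε)⁻¹ < s := hs1
      have h2 : 1 - (1 + ε)⁻¹ = ε / (1 + ε) := by
        field_simp; ring
      have h3 : ε / (1 + ε) < ε := by
        rw [div_lt_iff₀ (by positivity)]
        nlinarith
      linarith [h1, h2 ▸ h3]
  -- s * x ∈ ball x δ
  have hsxU : s * x ∈ U := by
    apply hball
    rw [Metric.mem_ball, Real.dist_eq]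
    have : s * x - x = (s - 1) * x := by ring
    rw [this, abs_mul, abs_of_pos hxpos]
    calc |s - 1| * x < ε * x := by exact mul_lt_mul_of_pos_right habs hxpos
      _ = δ / 2 := by rw [hε]; field_simp
      _ < δ := by linarith
  -- the map y ↦ s * y
  have hcont : Continuous (fun y : ℝ => s * y) := continuous_const.mul continuous_id
  have hopen : IsOpenMap (fun y : ℝ => s * y) :=
    (Homeomorph.mulLeft₀ s hspos.ne').isOpenMap
  have hMpre : IsMeagre ((fun y : ℝ => s * y) ⁻¹' M) :=
    hMmeagre.preimage_of_isOpenMap hcont hopen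
  have hUpre : IsOpen ((fun y : ℝ => s * y) ⁻¹' U) := hUopen.preimage hcont
  intro hmeagre
  -- the open set V := U ∩ (s•)⁻¹ U is nonempty, hence non-meagre
  set V := U ∩ ((fun y : ℝ => s * y) ⁻¹' U) with hV
  have hVopen : IsOpen V := hUopen.inter hUpre
  have hVne : V.Nonempty := ⟨x, hxU, hsxU⟩
  apply open_nonmeagre hVopen hVne
  have : V ⊆ (B ∩ {x : ℝ | s * x ∈ B}) ∪ (M ∪ (fun y : ℝ => s * y) ⁻¹' M) := by
    rintro y ⟨hyU, hsyU⟩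
    by_cases hyM : y ∈ M
    · exact Or.inr (Or.inl hyM)
    by_cases hsyM : s * y ∈ M
    · exact Or.inr (Or.inr hsyM)
    · exact Or.inl ⟨hUB y hyU hyM, hUB (s * y) hsyU hsyM⟩
  exact (meagre_union hmeagre (meagre_union hMmeagre hMpre)).mono this
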